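/- arXiv:2007.16180 — 5 statements merged into one kernel-verified Lean document; each statement's English description precedes it below -/
import Mathlib

section
/- Let p : E ⥤ B be a fibration, and let φ : A ⟶ B in E factor as a cocartesian arrow followed by a vertical arrow υ. Then φ is p-epic if and only if υ is an epimorphism in the fibre category E_{p(B)}. -/
/-!
Precomposing with a strongly cocartesian arrow neither creates nor destroys `p`-epicness, so it
suffices to treat the vertical arrow `υ`. Given `ψ, ψ'` out of its codomain with `p ψ = p ψ'`,
factor both through one cartesian lift `τ` of `p ψ`: `ψ = α ≫ τ` and `ψ' = α' ≫ τ` with `α, α'`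
vertical. Cartesianness of `τ` turns `υ ≫ ψ = υ ≫ ψ'` into `υ ≫ α = υ ≫ α'` in the fibre, where
`υ` can be cancelled.
-/

open CategoryTheory Functor

/-- `φ` is `p`-epic: postcomposition with pairs of arrows lying over a common arrow of
the base is injective. -/
def PEpic {E B : Type*} [Category E] [Category B] (p : E ⥤ B) {A b : E}
    (φ : A ⟶ b) : Prop :=
  ∀ {b' : E} (ψ ψ' : b ⟶ b'), p.map ψ = p.map ψ' → φ ≫ ψ = φ ≫ ψ' → ψ = ψ'

namespace PEpic

variable {E B : Type*} [Category E] [Category B] {p : E ⥤ B}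

lemma of_comp {A C D : E} {θ : A ⟶ C} {υ : C ⟶ D} (h : PEpic p (θ ≫ υ)) : PEpic p υ :=
  fun ψ ψ' hψ hυψ => h ψ ψ' hψ (by rw [Category.assoc, Category.assoc, hυψ])

lemma comp_of_isStronglyCocartesian {R S : B} (f : R ⟶ S) {A C D : E} (θ : A ⟶ C)
    [p.IsStronglyCocartesian f θ] {υ : C ⟶ D} (h : PEpic p υ) : PEpic p (θ ≫ υ) := by
  subst_hom_lift p f θ
  intro b' ψ ψ' hψ hθυψ
  have : p.IsHomLift (p.map (υ ≫ ψ)) (υ ≫ ψ') := by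
    rw [Functor.map_comp, hψ, ← Functor.map_comp]
    infer_instance
  refine h ψ ψ' hψ (IsStronglyCocartesian.ext p (p.map θ) θ (p.map (υ ≫ ψ)) ?_)
  simpa only [Category.assoc] using hθυψ

end PEpic

lemma pEpic_comp_iff_of_isStronglyCocartesian {E B : Type*} [Category E] [Category B]
    (p : E ⥤ B) {R S : B} (f : R ⟶ S) {A C D : E} (θ : A ⟶ C) [p.IsStronglyCocartesian f θ]
    (υ : C ⟶ D) : PEpic p (θ ≫ υ) ↔ PEpic p υ :=
  ⟨PEpic.of_comp, PEpic.comp_of_isStronglyCocartesian f θ⟩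

namespace CategoryTheory.Functor.Fiber

variable {E B : Type*} [Category E] [Category B] {p : E ⥤ B} {S : B}

lemma epi_of_pEpic_fiberInclusion_map {C D : Fiber p S} (υ : C ⟶ D)
    (h : PEpic p (fiberInclusion.map υ)) : Epi υ where
  left_cancellation α α' hυα := by
    ext
    refine h _ _ ?_ (by rw [← Functor.map_comp, ← Functor.map_comp, hυα])
    rw [IsHomLift.fac' p (𝟙 S) (fiberInclusion.map α),
      IsHomLift.fac' p (𝟙 S) (fiberInclusion.map α')]

lemma pEpic_fiberInclusion_map_of_epi [p.IsPreFibered] {C D : Fiber p S} (υ : C ⟶ D) [Epi υ] :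
    PEpic p (fiberInclusion.map υ) := by
  intro b' ψ ψ' hψ hυψ
  have hD : p.obj (fiberInclusion.obj D) = S := D.2
  let f : S ⟶ p.obj b' := eqToHom hD.symm ≫ p.map ψ
  have : p.IsHomLift f ψ := IsHomLift.lift_eqToHom_comp p (p.map ψ) ψ hD.symm
  have : p.IsHomLift f ψ' := by
    simp only [f, hψ]
    exact IsHomLift.lift_eqToHom_comp p (p.map ψ') ψ' hD.symm
  obtain ⟨e, τ, hτ⟩ := IsPreFibered.exists_isCartesian p rfl f
  have hυα : fiberInclusion.map υ ≫ IsCartesian.map p f τ ψ =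
      fiberInclusion.map υ ≫ IsCartesian.map p f τ ψ' :=
    IsCartesian.ext p f τ _ _ (by simpa only [Category.assoc, IsCartesian.fac] using hυψ)
  have hα : homMk p S (IsCartesian.map p f τ ψ) = homMk p S (IsCartesian.map p f τ ψ') :=
    cancel_epi υ |>.mp (hom_ext hυα)
  rw [← IsCartesian.fac p f τ ψ, ← IsCartesian.fac p f τ ψ']
  exact congrArg (fun α => fiberInclusion.map α ≫ τ) hα

lemma pEpic_fiberInclusion_map_iff [p.IsPreFibered] {C D : Fiber p S} (υ : C ⟶ D) :
    PEpic p (fiberInclusion.map υ) ↔ Epi υ :=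
  ⟨epi_of_pEpic_fiberInclusion_map υ, fun _ => pEpic_fiberInclusion_map_of_epi υ⟩

end CategoryTheory.Functor.Fiber

/-- For a fibration `p`, if `φ = θ ≫ υ` with `θ` cocartesian and `υ` a
vertical arrow (a morphism `υf` in the fibre over `S = p(b)`), then `φ` is `p`-epic iff
`υ` is an epimorphism in the fibre category. -/
theorem stmt_7 {E B : Type*} [Category E] [Category B] (p : E ⥤ B) [p.IsFibered]
    {S : B} (Cf Bf : Fiber p S) (υf : Cf ⟶ Bf)
    {A : E} (θ : A ⟶ Fiber.fiberInclusion.obj Cf)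
    [p.IsStronglyCocartesian (p.map θ) θ] :
    PEpic p (θ ≫ Fiber.fiberInclusion.map υf) ↔ Epi υf := by
  rw [pEpic_comp_iff_of_isStronglyCocartesian p (p.map θ) θ, Fiber.pEpic_fiberInclusion_map_iff]
end

section
/- Let p : E ⥤ B be a fibration such that B and E have finite products and p preserves them. Then each fibre E_X has finite products. -/
open CategoryTheory Functor Limits

namespace StmtNine

open CategoryTheory.IsHomLift CategoryTheory.Functor.Fiber

variable {E B : Type*} [Category E] [Category B] (p : E ⥤ B) [p.IsFibered] (X : B)

/-- For a fibration `p`, any finite discrete diagram in a fibre `Fiber p X` has a limit,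
provided `E` has (and `p` preserves) limits of that shape: take the limit `P` of the
underlying diagram in `E`, the comparison map `δ : X ⟶ p.obj P` obtained from the preserved
limit cone, and a cartesian lift of `δ`; its domain is the product in the fibre. -/
lemma hasLimit_fiber {J : Type} [Fintype J] (F : Discrete J ⥤ Fiber p X)
    [HasLimitsOfShape (Discrete J) E] [PreservesLimitsOfShape (Discrete J) p] :
    HasLimit F := by
  set G : Discrete J ⥤ E := F ⋙ fiberInclusion with hG
  -- the limit cone in E
  let P : E := limit G
  have hL : IsLimit (p.mapCone (limit.cone G)) := isLimitOfPreserves p (limit.isLimit G)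
  -- cone over G ⋙ p with apex X
  let cX : Cone (G ⋙ p) :=
    { pt := X
      π := Discrete.natTrans fun j => eqToHom ((F.obj j).2).symm }
  let δ : X ⟶ p.obj P := hL.lift cX
  have hδ : ∀ j : Discrete J, δ ≫ p.map (limit.π G j) = eqToHom ((F.obj j).2).symm :=
    fun j => hL.fac cX j
  -- cartesian lift of δ
  obtain ⟨b, φ, hφ⟩ := Functor.IsPreFibered.exists_isCartesian' (p := p) δ
  haveI := hφ
  haveI hsc : p.IsStronglyCartesian δ φ := inferInstance
  have hb : p.obj b = X := domain_eq p δ φ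
  -- the legs of the candidate limit cone in the fiber
  have hlift : ∀ j : Discrete J, p.IsHomLift (𝟙 X) (φ ≫ limit.π G j) := by
    intro j
    apply of_commsq p _ _ hb (F.obj j).2
    have hj : p.obj (G.obj j) = X := (F.obj j).2
    have hδj : δ ≫ p.map (limit.π G j) = eqToHom hj.symm := hδ j
    show p.map (φ ≫ limit.π G j) ≫ eqToHom hj = eqToHom hb ≫ 𝟙 X
    rw [p.map_comp, fac' p δ φ]
    simp only [eqToHom_refl, Category.id_comp, Category.assoc]
    rw [reassoc_of% hδj]
    simp
  let c : Cone F :=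
    { pt := ⟨b, hb⟩
      π := Discrete.natTrans fun j => ⟨φ ≫ limit.π G j, hlift j⟩ }
  -- the map into P induced by a cone in the fiber
  let φ' : ∀ s : Cone F, s.pt.1 ⟶ P := fun s =>
    limit.lift G ⟨s.pt.1, Discrete.natTrans fun j => (s.π.app j).1⟩
  have hφ'π : ∀ (s : Cone F) (j : Discrete J), φ' s ≫ limit.π G j = (s.π.app j).1 :=
    fun s j => limit.lift_π _ j
  have hφ'lift : ∀ s : Cone F, p.IsHomLift δ (φ' s) := by
    intro s
    apply of_commsq p _ _ s.pt.2 rfl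
    simp only [eqToHom_refl, Category.comp_id]
    apply hL.hom_ext
    intro j
    have h1 : (p.mapCone (limit.cone G)).π.app j = p.map (limit.π G j) := rfl
    haveI := (s.π.app j).2
    rw [h1, Category.assoc, hδ j, ← p.map_comp, hφ'π s j]
    exact (fac' p (𝟙 X) ((s.π.app j).1)).trans (by simp only [Category.id_comp]; exact (eqToHom_trans _ _).trans (eqToHom_trans _ _).symm)
  -- the induced map in the fiber
  let χ : ∀ s : Cone F, s.pt.1 ⟶ b := fun s =>
    haveI := hφ'lift s
    Functor.IsStronglyCartesian.map p δ φ (Category.id_comp δ).symm (φ' s)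
  have hχlift : ∀ s : Cone F, p.IsHomLift (𝟙 X) (χ s) := fun s =>
    haveI := hφ'lift s
    Functor.IsStronglyCartesian.map_isHomLift p δ φ _ _
  have hχfac : ∀ s : Cone F, χ s ≫ φ = φ' s := fun s =>
    haveI := hφ'lift s
    Functor.IsStronglyCartesian.fac p δ φ _ _
  have key : IsLimit c := by
    refine ⟨fun s => ⟨χ s, hχlift s⟩, fun s j => ?_, fun s m hm => ?_⟩
    · apply Fiber.hom_ext
      show χ s ≫ (φ ≫ limit.π G j) = (s.π.app j).1
      rw [← Category.assoc, hχfac s, hφ'π s j]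
    · apply Fiber.hom_ext
      show (fiberInclusion.map m) = χ s
      haveI : @Functor.IsHomLift B E _ _ p X X s.pt.1 b (𝟙 X) (fiberInclusion.map m) := m.2
      haveI := hφ'lift s
      apply Functor.IsStronglyCartesian.map_uniq p δ φ (Category.id_comp δ).symm (φ' s) (ψ := fiberInclusion.map m)
      apply limit.hom_ext
      intro j
      exact (Category.assoc _ _ _).trans ((congrArg Subtype.val (hm j)).trans (hφ'π s j).symm)
  exact HasLimit.mk ⟨c, key⟩

end StmtNine

/-- If `p : E ⥤ B` is a fibration, where `E` and `B` have finite products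
and `p` preserves them, then each fibre `E_X` has finite products. -/
theorem stmt_9 {E B : Type*} [Category E] [Category B] (p : E ⥤ B) [p.IsFibered]
    [HasFiniteProducts E] [HasFiniteProducts B]
    [PreservesFiniteProducts p] (X : B) :
    HasFiniteProducts (Fiber p X) := by
  constructor
  intro n
  constructor
  intro F
  exact StmtNine.hasLimit_fiber p X F
end

section
/- Let (L, R) be a weak factorisation system on a category C, let F = R regarded as a full subcategory of the arrow category, and consider the fibration cod|_F : F ⥤ C. An arrow (f₀, f₁) : a ⟶ b of F (a commutative square with f₁ : A ⟶ B on top, f₀ : X ⟶ Y on the bottom, a : A ⟶ X, b : B ⟶ Y in F) is cod|_F-epic if and only if every lifting problem of f₁ against an arrow in F has at most one diagonal filler. -/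
open CategoryTheory Functor Limits

/-- `f` is a retract of `g` in the arrow category. -/
def IsRetractOf {C : Type*} [Category C] {A X B Y : C} (f : A ⟶ X) (g : B ⟶ Y) : Prop :=
  ∃ (i : A ⟶ B) (r : B ⟶ A) (j : X ⟶ Y) (s : Y ⟶ X),
    i ≫ r = 𝟙 A ∧ j ≫ s = 𝟙 X ∧ i ≫ g = f ≫ j ∧ r ≫ f = g ≫ s

/-- `(L, R)` is a weak factorisation system: both classes contain the isomorphisms and
are closed under retracts, every arrow factors as an `L`-map followed by an `R`-map,
and `L`-maps have the left lifting property against `R`-maps. -/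
def IsWFS {C : Type*} [Category C] (L R : MorphismProperty C) : Prop :=
  (∀ {X Y : C} (e : X ⟶ Y), IsIso e → L e ∧ R e) ∧
  (∀ {A X B Y : C} (f : A ⟶ X) (g : B ⟶ Y), IsRetractOf f g → (L g → L f) ∧ (R g → R f)) ∧
  (∀ {X Y : C} (f : X ⟶ Y), ∃ (Z : C) (i : X ⟶ Z) (q : Z ⟶ Y), L i ∧ R q ∧ i ≫ q = f) ∧
  (∀ {A X B Y : C} (i : A ⟶ X) (q : B ⟶ Y), L i → R q → HasLiftingProperty i q)

/-- The fibration `cod|_F : F ⥤ C` on the full subcategory `F` of the arrow category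
spanned by the arrows in `R`. -/
def codR {C : Type*} [Category C] (R : MorphismProperty C) :
    ObjectProperty.FullSubcategory (fun g : Arrow C => R g.hom) ⥤ C :=
  ObjectProperty.ι _ ⋙ Arrow.rightFunc

/- The fillers `d`, `d'` induce two sections of the pullback of `g` along `k`, i.e. two arrows
`b ⟶ b'` of `F` lying over `𝟙`, where `b'` is that pullback composed with `b` (an `R`-map, since
`R = L.rlp` is closed under base change and composition); they agree after `sq`, so `cod|_F`-epicness identifies them, and with them `d` and `d'`. Conversely, arrows
`b ⟶ b'` over a common base arrow that agree after `sq` have top components filling one and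
the same lifting problem of `sq.left` against `b'`. -/

namespace IsWFS

variable {C : Type*} [Category C] {L R : MorphismProperty C}

lemma le_rlp (hwfs : IsWFS L R) : R ≤ L.rlp :=
  fun _ _ _ hq _ _ i hi => hwfs.2.2.2 i _ hi hq

/-- Retract argument: factor `q = i ≫ r`; a lift in the square `(𝟙, r)` against `q`
exhibits `q` as a retract of `r`. -/
lemma rlp_le (hwfs : IsWFS L R) : L.rlp ≤ R := by
  intro X Y q hq
  obtain ⟨Z, i, r, hi, hr, rfl⟩ := hwfs.2.2.1 q
  have := hq i hi
  have sq : CommSq (𝟙 X) i (i ≫ r) r := ⟨by simp⟩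
  exact (hwfs.2.1 _ r ⟨i, sq.lift, 𝟙 Y, 𝟙 Y, sq.fac_left, by simp, by simp, by simp⟩).2 hr

lemma rlp_eq (hwfs : IsWFS L R) : L.rlp = R :=
  le_antisymm hwfs.rlp_le hwfs.le_rlp

lemma isStableUnderComposition (hwfs : IsWFS L R) : R.IsStableUnderComposition := by
  rw [← hwfs.rlp_eq]
  infer_instance

end IsWFS

def AtMostOneFiller {C : Type*} [Category C] {A B : C} (f : A ⟶ B) (R : MorphismProperty C) :
    Prop :=
  ∀ (g : Arrow C), R g.hom →
    ∀ (h : A ⟶ g.left) (k : B ⟶ g.right), h ≫ g.hom = f ≫ k →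
      ∀ (d d' : B ⟶ g.left), f ≫ d = h → d ≫ g.hom = k → f ≫ d' = h → d' ≫ g.hom = k → d = d'

section codR

variable {C : Type*} [Category C] {R : MorphismProperty C}
  {a b : ObjectProperty.FullSubcategory (fun g : Arrow C => R g.hom)}

lemma pEpic_codR_of_atMostOneFiller (sq : a ⟶ b) (huniq : AtMostOneFiller sq.hom.left R) :
    PEpic (codR R) sq := by
  intro b' ψ ψ' (hbase : ψ.hom.right = ψ'.hom.right) hcomp
  have hleft : sq.hom.left ≫ ψ.hom.left = sq.hom.left ≫ ψ'.hom.left :=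
    congrArg (fun φ => φ.hom.left) hcomp
  refine ObjectProperty.hom_ext _ (Arrow.hom_ext _ _ ?_ hbase)
  refine huniq b'.obj b'.property _ (b.obj.hom ≫ ψ.hom.right) (by simp) _ _ rfl (Arrow.w ψ.hom)
    hleft.symm ?_
  rw [hbase, Arrow.w ψ'.hom]

lemma atMostOneFiller_of_pEpic_codR [HasPullbacks C] [R.IsStableUnderBaseChange]
    [R.IsStableUnderComposition] (sq : a ⟶ b) (hepi : PEpic (codR R) sq) :
    AtMostOneFiller sq.hom.left R := by
  intro g hg h k _ d d' hd hdk hd' hd'k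
  let b' : ObjectProperty.FullSubcategory (fun g : Arrow C => R g.hom) :=
    ⟨Arrow.mk (pullback.snd g.hom k ≫ b.obj.hom),
      R.comp_mem _ _ (R.pullback_snd _ _ hg) b.property⟩
  let s (e : b.obj.left ⟶ g.left) (he : e ≫ g.hom = k) : b.obj.left ⟶ pullback g.hom k :=
    pullback.lift e (𝟙 _) (by simp [he])
  have s_fst e he : s e he ≫ pullback.fst g.hom k = e := pullback.lift_fst _ _ _
  have s_snd e he : s e he ≫ pullback.snd g.hom k = 𝟙 _ := pullback.lift_snd _ _ _
  let toPullback e he : b ⟶ b' :=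
    ObjectProperty.homMk <| Arrow.homMk (u := s e he) (v := 𝟙 _) (by simp [b', reassoc_of% s_snd])
  have heq : toPullback d hdk = toPullback d' hd'k := by
    refine hepi _ _ rfl (ObjectProperty.hom_ext _ (Arrow.hom_ext _ _ ?_ rfl))
    apply pullback.hom_ext <;> simp [toPullback, s_fst, s_snd, hd, hd']
  rw [← s_fst d hdk, ← s_fst d' hd'k]
  exact congrArg (fun φ => φ.hom.left ≫ pullback.fst g.hom k) heq

end codR

/-- for a weak factorisation system `(L, R)` with `R` stable under
pullback, an arrow `sq : a ⟶ b` of the full subcategory `F = R` of the arrow category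
(a commutative square with top component `sq.left = f₁` and bottom component
`sq.right = f₀`) is `cod|_F`-epic iff every lifting problem of `f₁` against an arrow
in `F` has at most one diagonal filler. -/
theorem stmt_10 {C : Type*} [Category C] [HasPullbacks C]
    (L R : MorphismProperty C) (hwfs : IsWFS L R) [R.IsStableUnderBaseChange]
    (a b : ObjectProperty.FullSubcategory (fun g : Arrow C => R g.hom)) (sq : a ⟶ b) :
    PEpic (codR R) sq ↔
      ∀ (g : Arrow C), R g.hom →
        ∀ (h : a.obj.left ⟶ g.left) (k : b.obj.left ⟶ g.right),
          h ≫ g.hom = sq.hom.left ≫ k →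
            ∀ (d d' : b.obj.left ⟶ g.left),
              sq.hom.left ≫ d = h → d ≫ g.hom = k →
              sq.hom.left ≫ d' = h → d' ≫ g.hom = k → d = d' := by
  have := hwfs.isStableUnderComposition
  exact ⟨atMostOneFiller_of_pEpic_codR sq, pEpic_codR_of_atMostOneFiller sq⟩
end

section
/- Let C be a category with pullbacks. For every pair of arrows f : Y ⟶ Z (with Z having products with X, etc.) and object a : A ⟶ Z × X in the slice over Z × X, the codomain fibration cod : C² ⥤ C satisfies the Beck–Chevalley condition for the pullback square formed by f × X : Y × X ⟶ Z × X and the parametrised diagonals: composition with the parametrised diagonal ⟨pr₁, pr₂, pr₂⟩ gives a left adjoint to pullback along ⟨pr₁, pr₂, pr₂⟩, and the canonical comparison map Σ_{Y,X}((f × X)* a) ⟶ (f × X × X)*(Σ_{Z,X} a) is an isomorphism. -/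
/-!
The square formed by `f × X` and the two parametrised diagonals is a pullback, because graphs
are stable under base change (`δ_Y` is the graph of `pr₂`, and `pr₂ = (f × X) ≫ pr₂`). Pasting it
below the pullback square defining `(f × X)* a` therefore exhibits `Σ_{Y,X}((f × X)* a)` as the
pullback of `Σ_{Z,X} a` along `f × X × X`, and the comparison map is the induced isomorphism.
-/

open CategoryTheory Limits

noncomputable section

variable {C : Type*} [Category C] [HasFiniteLimits C]

/-- The parametrised diagonal `⟨pr₁, pr₂, pr₂⟩ : Y × X ⟶ (Y × X) × X`. -/
def pdiag (Y X : C) : Y ⨯ X ⟶ (Y ⨯ X) ⨯ X := prod.lift (𝟙 _) prod.snd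

lemma pdiag_square {Y Z : C} (X : C) (f : Y ⟶ Z) :
    prod.map f (𝟙 X) ≫ pdiag Z X = pdiag Y X ≫ prod.map (prod.map f (𝟙 X)) (𝟙 X) := by
  apply Limits.prod.hom_ext <;> simp [pdiag]

/-- The canonical Beck–Chevalley comparison map
`Σ_{Y,X}((f × X)* a) ⟶ (f × X × X)*(Σ_{Z,X} a)` for the codomain fibration. -/
def bcMap {Y Z : C} (X : C) (f : Y ⟶ Z) (a : Over (Z ⨯ X)) :
    (Over.map (pdiag Y X)).obj ((Over.pullback (prod.map f (𝟙 X))).obj a) ⟶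
      (Over.pullback (prod.map (prod.map f (𝟙 X)) (𝟙 X))).obj
        ((Over.map (pdiag Z X)).obj a) :=
  Over.homMk
    (pullback.lift (pullback.fst a.hom (prod.map f (𝟙 X)))
      (pullback.snd a.hom (prod.map f (𝟙 X)) ≫ pdiag Y X)
      (by rw [Over.map_obj_hom, ← Category.assoc, pullback.condition, Category.assoc,
            pdiag_square, ← Category.assoc]))
    (by exact pullback.lift_snd _ _ _)

end

section

variable {C : Type*} [Category C]

lemma isPullback_graph {A A' X : C} [HasBinaryProduct A X] [HasBinaryProduct A' X]
    (g : A ⟶ A') (k : A ⟶ X) (k' : A' ⟶ X) (hk : k = g ≫ k') :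
    IsPullback g (prod.lift (𝟙 A) k) (prod.lift (𝟙 A') k') (prod.map g (𝟙 X)) := by
  subst hk
  have w : g ≫ prod.lift (𝟙 A') k' = prod.lift (𝟙 A) (g ≫ k') ≫ prod.map g (𝟙 X) := by
    ext <;> simp [prod.lift_fst, prod.lift_snd]
  refine .of_isLimit (PullbackCone.IsLimit.mk w (fun s => s.snd ≫ prod.fst) (fun s => ?_)
    (fun s => ?_) (fun s m _ hm => by simpa [prod.lift_fst] using hm =≫ prod.fst))
  · simpa [prod.lift_fst] using (s.condition =≫ prod.fst).symm
  · have hfst : s.snd ≫ prod.fst ≫ g = s.fst := by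
      simpa [prod.lift_fst] using (s.condition =≫ prod.fst).symm
    have hsnd : s.fst ≫ k' = s.snd ≫ prod.snd := by
      simpa [prod.lift_snd] using s.condition =≫ prod.snd
    ext
    · simp [prod.lift_fst]
    · simp [prod.lift_snd, reassoc_of% hfst, hsnd]

lemma isIso_pullback_lift_of_isPullback {P A B D W : C} {t : P ⟶ A} {l : P ⟶ B} {r : A ⟶ D}
    {b : B ⟶ D} (sq : IsPullback t l r b) (x : W ⟶ A) [HasPullback x t]
    [HasPullback (x ≫ r) b] :
    IsIso (pullback.lift (pullback.fst x t) (pullback.snd x t ≫ l)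
        (by rw [pullback.condition_assoc, sq.w, Category.assoc]) :
      pullback x t ⟶ pullback (x ≫ r) b) := by
  have pasted := (IsPullback.of_hasPullback x t).paste_vert sq
  convert (inferInstance : IsIso pasted.isoPullback.hom)
  ext <;> simp [pullback.lift_fst, pullback.lift_snd]

end

section

variable {C : Type*} [Category C] [HasFiniteLimits C]

lemma pdiag_isPullback {Y Z : C} (X : C) (f : Y ⟶ Z) :
    IsPullback (prod.map f (𝟙 X)) (pdiag Y X) (pdiag Z X)
      (prod.map (prod.map f (𝟙 X)) (𝟙 X)) :=
  isPullback_graph _ _ _ (by simp)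

/-- for the codomain fibration, composition with the parametrised
diagonal is left adjoint to pullback along it, and the Beck–Chevalley comparison map
`Σ_{Y,X}((f × X)* a) ⟶ (f × X × X)*(Σ_{Z,X} a)` is an isomorphism. -/
theorem stmt_12 {Y Z : C} (X : C) (f : Y ⟶ Z) (a : Over (Z ⨯ X)) :
    Nonempty (Over.map (pdiag Y X) ⊣ Over.pullback (pdiag Y X)) ∧
      IsIso (bcMap X f a) := by
  refine ⟨⟨Over.mapPullbackAdj _⟩, ?_⟩
  have : IsIso ((Over.forget _).map (bcMap X f a)) :=
    isIso_pullback_lift_of_isPullback (pdiag_isPullback X f) a.hom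
  exact isIso_of_reflects_iso (bcMap X f a) (Over.forget _)

end
end

section
/- Let B be a small category. The pair of functors refl : B ⥤ B^≅ (sending an object to its identity isomorphism) over the diagonal Δ : B ⥤ B × B is a morphism of algebras from (id_B with its canonical algebra structure) to (⟨cod, dom⟩ : B^≅ ⥤ B × B with structure map str_B): that is, the square str_B ∘ M(Δ, refl) = refl ∘ (R id_B structure map) commutes, where M(Δ, refl) : M(id_B) ⥤ M(⟨cod,dom⟩) is the induced functor. -/
open CategoryTheory

universe u

/-- `B^≅`: the full subcategory of the arrow category spanned by the isomorphisms. -/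
abbrev IsoCat (D : Type u) [SmallCategory D] :=
  ObjectProperty.FullSubcategory (fun f : Arrow D => IsIso f.hom)

/-- The codomain functor restricted to isomorphisms. -/
def isoCod (D : Type u) [SmallCategory D] : IsoCat D ⥤ D :=
  ObjectProperty.ι _ ⋙ Arrow.rightFunc

/-- The domain functor restricted to isomorphisms. -/
def isoDom (D : Type u) [SmallCategory D] : IsoCat D ⥤ D :=
  ObjectProperty.ι _ ⋙ Arrow.leftFunc

/-- `P = ⟨cod, dom⟩ : B^≅ ⥤ B × B`. -/
def isoP (D : Type u) [SmallCategory D] : IsoCat D ⥤ D × D :=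
  Functor.prod' (isoCod D) (isoDom D)

/-- `M F` for `F : A ⥤ B`: objects are pairs `(A, x : B ≅ F A)`. -/
abbrev MCat {A B : Type u} [SmallCategory A] [SmallCategory B] (F : A ⥤ B) :=
  ObjectProperty.FullSubcategory (fun c : Comma (𝟭 B) F => IsIso c.hom)

/-- `R F : M F ⥤ B`: the structure map of the algebra `id_B`, sending `(A, x : B ≅ A)`
to `B`. -/
def rCat {A B : Type u} [SmallCategory A] [SmallCategory B] (F : A ⥤ B) :
    MCat F ⥤ B :=
  ObjectProperty.ι _ ⋙ Comma.fst _ _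

/-- `refl : B ⥤ B^≅` sends an object to its identity isomorphism. -/
def reflF (B : Type u) [SmallCategory B] : B ⥤ IsoCat B where
  obj X := ⟨Arrow.mk (𝟙 X), by dsimp; infer_instance⟩
  map f := ObjectProperty.homMk (Arrow.homMk (u := f) (v := f) (by simp))
  map_id _ := rfl
  map_comp _ _ := rfl

/-- `str_B : M P ⥤ B^≅`, sending `(y, (b₂, b₁))` to `b₂⁻¹ ∘ y ∘ b₁`. -/
noncomputable def strB (B : Type u) [SmallCategory B] : MCat (isoP B) ⥤ IsoCat B where
  obj c :=
    haveI := c.obj.right.2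
    haveI : IsIso c.obj.hom.1 := ((isIso_prod_iff (C := B) (D := B)).mp c.2).1
    haveI : IsIso c.obj.hom.2 := ((isIso_prod_iff (C := B) (D := B)).mp c.2).2
    ⟨Arrow.mk (c.obj.hom.2 ≫ c.obj.right.obj.hom ≫ @inv _ _ _ _ c.obj.hom.1 ((isIso_prod_iff (C := B) (D := B)).mp c.2).1), by
      dsimp
      exact IsIso.comp_isIso' ((isIso_prod_iff (C := B) (D := B)).mp c.2).2
        (IsIso.comp_isIso' c.obj.right.2
          (@IsIso.inv_isIso _ _ _ _ _ ((isIso_prod_iff (C := B) (D := B)).mp c.2).1))⟩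
  map := fun {c c'} m =>
    ObjectProperty.homMk (Arrow.homMk (u := m.hom.left.2) (v := m.hom.left.1) (by
      have aux : ∀ {A1 A2 A1' A2' L R L' R' : B} (p1 : A1 ⟶ R) (p2 : A2 ⟶ L) (y : L ⟶ R)
          (p1' : A1' ⟶ R') (p2' : A2' ⟶ L') (y' : L' ⟶ R') (u1 : A1 ⟶ A1') (u2 : A2 ⟶ A2')
          (l : L ⟶ L') (r : R ⟶ R') [IsIso p1] [IsIso p1'],
          u1 ≫ p1' = p1 ≫ r → u2 ≫ p2' = p2 ≫ l → l ≫ y' = y ≫ r →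
          u2 ≫ p2' ≫ y' ≫ inv p1' = (p2 ≫ y ≫ inv p1) ≫ u1 := by
        intro A1 A2 A1' A2' L R L' R' p1 p2 y p1' p2' y' u1 u2 l r _ _ h1 h2 hw
        have key : r ≫ inv p1' = inv p1 ≫ u1 := by
          rw [IsIso.comp_inv_eq, Category.assoc, h1, IsIso.inv_hom_id_assoc]
        rw [← Category.assoc, h2, Category.assoc, reassoc_of% hw, key]
        simp only [Category.assoc]
      exact @aux _ _ _ _ _ _ _ _ _ _ _ _ _ _ _ _ _ _
        ((isIso_prod_iff (C := B) (D := B)).mp c.2).1 ((isIso_prod_iff (C := B) (D := B)).mp c'.2).1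
        (congrArg Prod.fst m.hom.w) (congrArg Prod.snd m.hom.w) m.hom.right.hom.w))
  map_id _ := rfl
  map_comp _ _ := rfl

/-- The functor `M(Δ, refl) : M(id_B) ⥤ M(⟨cod, dom⟩)` induced by the square
`(Δ, refl) : id_B ⟶ ⟨cod, dom⟩`. -/
def mDeltaRefl (B : Type u) [SmallCategory B] : MCat (𝟭 B) ⥤ MCat (isoP B) where
  obj c :=
    haveI := c.2
    ⟨{ left := (c.obj.left, c.obj.left), right := (reflF B).obj c.obj.right,
       hom := (c.obj.hom, c.obj.hom) },
      (isIso_prod_iff (C := B) (D := B)).mpr ⟨c.2, c.2⟩⟩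
  map := fun {c c'} m =>
    ObjectProperty.homMk <|
    { left := (m.hom.left, m.hom.left)
      right := (reflF B).map m.hom.right
      w := by refine Prod.ext ?_ ?_ <;> · dsimp [isoP, isoCod, isoDom, reflF]; exact m.hom.w }
  map_id _ := rfl
  map_comp _ _ := rfl

lemma CategoryTheory.ObjectProperty.FullSubcategory.eqToHom_hom {C : Type*} [Category C]
    {P : ObjectProperty C} {X Y : P.FullSubcategory} (h : X = Y) :
    (eqToHom h).hom = eqToHom (congrArg (·.obj) h) := by
  subst h
  rfl

lemma strB_obj_mDeltaRefl_obj (B : Type u) [SmallCategory B] (c : MCat (𝟭 B)) :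
    (strB B).obj ((mDeltaRefl B).obj c) = (reflF B).obj ((rCat (𝟭 B)).obj c) := by
  have := c.2
  ext
  change Arrow.mk (c.obj.hom ≫ 𝟙 _ ≫ inv c.obj.hom) = Arrow.mk (𝟙 c.obj.left)
  rw [Category.id_comp, IsIso.hom_inv_id]
  rfl

/-- `(Δ, refl)` is a morphism of algebras from `id_B` (with its
canonical structure, the left projection `M(id_B) ⥤ B`) to `(⟨cod, dom⟩, str_B)`:
`str_B ∘ M(Δ, refl) = refl ∘ (structure map of id_B)`. -/
theorem stmt_18 (B : Type u) [SmallCategory B] :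
    mDeltaRefl B ⋙ strB B = rCat (𝟭 B) ⋙ reflF B := by
  refine CategoryTheory.Functor.ext (strB_obj_mDeltaRefl_obj B) fun c c' m => ?_
  -- Both sides send `m` to `(m.hom.left, m.hom.left)`; the `eqToHom`s become transports along
  -- equalities of definitionally equal objects of `B`, which are definitionally identities.
  ext <;>
  simp only [ObjectProperty.FullSubcategory.comp_hom, ObjectProperty.FullSubcategory.eqToHom_hom,
    Arrow.comp_left, Arrow.comp_right, Arrow.eqToHom_left, Arrow.eqToHom_right] <;>
  exact (Category.comp_id _).symm.trans (Category.id_comp _).symm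
end
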